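/- Let X be a proper geodesic δ-hyperbolic space whose Gromov boundary ∂X contains at least two points. If X is K-roughly starlike from a point ω ∈ ∂X, then X is (K + 10δ)-roughly starlike from every point x ∈ X ∪ ∂X. -/

import Mathlib

/-!
Every point `x` is `K`-close to a point `p` of a geodesic line `γ`. For a basepoint `w`, the
thin triangles with vertices `γ (-T)`, `γ T`, `w` contain geodesic segments issuing from `w` that
pass `δ`-close to `p`. Taking `w = z`, resp. `w = ρ T`, and letting `T → ∞`, properness lets these
segments converge pointwise along an ultrafilter to a ray from `z`, resp. a line, still passing
`δ`-close to `p`; that the line comes from the boundary point of `ρ` follows because geodesics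
with nearby starting points and a common endpoint fellow-travel. This gives even `K + δ`.
-/

open Metric Set Filter Topology
open scoped ENNReal Classical

noncomputable section

namespace Paper

variable {X Y : Type*}

/-- The distance function of a metric space. -/
def distFun (X : Type*) [MetricSpace X] : X → X → ℝ := fun p q => dist p q

/-- `e` is a genuine metric distance function. -/
def IsMetricDist (e : X → X → ℝ) : Prop :=
  (∀ x, e x x = 0) ∧ (∀ x y, x ≠ y → 0 < e x y) ∧ (∀ x y, e x y = e y x) ∧
    ∀ x y z, e x z ≤ e x y + e y z

/-- Cauchy sequence with respect to the distance function `e`. -/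
def CauchyWrt (e : X → X → ℝ) (u : ℕ → X) : Prop :=
  ∀ δ : ℝ, 0 < δ → ∃ N : ℕ, ∀ m, N ≤ m → ∀ n, N ≤ n → e (u m) (u n) < δ

/-- The sequence converges, w.r.t. `e`, to a point of the space. -/
def ConvWrt (e : X → X → ℝ) (u : ℕ → X) : Prop :=
  ∃ y : X, Tendsto (fun n => e (u n) y) atTop (𝓝 0)

/-- The space is incomplete with respect to `e`:
some Cauchy sequence does not converge in the space. -/
def IncompleteWrt (e : X → X → ℝ) : Prop :=
  ∃ u : ℕ → X, CauchyWrt e u ∧ ¬ ConvWrt e u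

/-- Distance from `x` to the metric boundary (the completion minus the space),
measured w.r.t. `e`: the infimum of the limits `lim_n e x (u n)` over all Cauchy
sequences `u` that have no limit in the space. -/
def bdryDistWrt (e : X → X → ℝ) (x : X) : ℝ :=
  sInf { r : ℝ | ∃ u : ℕ → X, CauchyWrt e u ∧ ¬ ConvWrt e u ∧
    Tendsto (fun n => e x (u n)) atTop (𝓝 r) }

/-- Sequential compactness of a set w.r.t. `e`. -/
def SeqCompactWrt (e : X → X → ℝ) (s : Set X) : Prop :=
  ∀ u : ℕ → X, (∀ n, u n ∈ s) → ∃ y ∈ s, ∃ φ : ℕ → ℕ, StrictMono φ ∧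
    Tendsto (fun n => e (u (φ n)) y) atTop (𝓝 0)

/-- Local compactness w.r.t. `e`: every point has arbitrarily small compact closed balls. -/
def LocallyCompactWrt (e : X → X → ℝ) : Prop :=
  ∀ x : X, ∀ r : ℝ, 0 < r → ∃ r' : ℝ, 0 < r' ∧ r' ≤ r ∧ SeqCompactWrt e { y | e x y ≤ r' }

/-- Continuity of a curve on a set of parameters, w.r.t. `e`. -/
def ContinuousOnWrt (e : X → X → ℝ) (γ : ℝ → X) (I : Set ℝ) : Prop :=
  ∀ t ∈ I, ∀ δ : ℝ, 0 < δ → ∃ η : ℝ, 0 < η ∧ ∀ s ∈ I, |s - t| < η → e (γ s) (γ t) < δ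

/-- The length (total variation) of the curve `γ` on the parameter set `I`, w.r.t. `e`. -/
def varOn (e : X → X → ℝ) (γ : ℝ → X) (I : Set ℝ) : ℝ≥0∞ :=
  ⨆ p : ℕ × { u : ℕ → ℝ // Monotone u ∧ ∀ i, u i ∈ I },
    ∑ i ∈ Finset.range p.1, ENNReal.ofReal (e (γ (p.2.1 (i + 1))) (γ (p.2.1 i)))

/-- `X` with distance `e` is an `A`-uniform metric space: it is a locally compact,
incomplete metric space any two of whose points are joined by an `A`-uniform curve. -/
def IsUniformSpcWrt (e : X → X → ℝ) (A : ℝ) : Prop :=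
  IsMetricDist e ∧ LocallyCompactWrt e ∧ IncompleteWrt e ∧
  ∀ x y : X, ∃ (a b : ℝ) (γ : ℝ → X), a ≤ b ∧ ContinuousOnWrt e γ (Icc a b) ∧
    γ a = x ∧ γ b = y ∧
    varOn e γ (Icc a b) ≤ ENNReal.ofReal (A * e x y) ∧
    ∀ t ∈ Icc a b, min (varOn e γ (Icc a t)) (varOn e γ (Icc t b)) ≤
      ENNReal.ofReal (A * bdryDistWrt e (γ t))

/-- `f` is `∂`-Lipschitz with data `(L, lam)`. -/
def PartialLipschitzWrt (e : X → X → ℝ) (e' : Y → Y → ℝ) (L lam : ℝ) (f : X → Y) : Prop :=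
  ∀ x y z : X, e y x < lam * bdryDistWrt e x → e z x < lam * bdryDistWrt e x →
    e' (f y) (f z) / bdryDistWrt e' (f x) ≤ L * (e y z / bdryDistWrt e x)

/-- `f` (with inverse `g`) is `∂`-biLipschitz with data `(L, lam)`. -/
def PartialBiLipschitzWrt (e : X → X → ℝ) (e' : Y → Y → ℝ) (L lam : ℝ)
    (f : X → Y) (g : Y → X) : Prop :=
  1 ≤ L ∧ Function.LeftInverse g f ∧ Function.RightInverse g f ∧
    PartialLipschitzWrt e e' L lam f ∧ PartialLipschitzWrt e' e L lam g

/-- Cross-ratio of a quadruple of points, w.r.t. `e`. -/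
def crossRatioWrt (e : X → X → ℝ) (x y z w : X) : ℝ := e x z * e y w / (e x y * e z w)

/-- `f` is `η`-quasimöbius. -/
def QuasiMobiusWrt (e : X → X → ℝ) (e' : Y → Y → ℝ) (η : ℝ → ℝ) (f : X → Y) : Prop :=
  ∀ x y z w : X, x ≠ y → x ≠ z → x ≠ w → y ≠ z → y ≠ w → z ≠ w →
    crossRatioWrt e' (f x) (f y) (f z) (f w) ≤ η (crossRatioWrt e x y z w)

/-- `f` is `η`-quasisymmetric. -/
def QuasiSymmetricWrt (e : X → X → ℝ) (e' : Y → Y → ℝ) (η : ℝ → ℝ) (f : X → Y) : Prop :=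
  ∀ x y z : X, ∀ t : ℝ, 0 ≤ t → e x y ≤ t * e x z → e' (f x) (f y) ≤ η t * e' (f x) (f z)

/-- `η` is (the restriction to `[0,∞)` of) a self-homeomorphism of `[0,∞)`:
continuous, strictly increasing, fixing `0`, and tending to `∞`. -/
def IsControlFun (η : ℝ → ℝ) : Prop :=
  ContinuousOn η (Ici 0) ∧ StrictMonoOn η (Ici 0) ∧ η 0 = 0 ∧ Tendsto η atTop atTop

/-- The conformal deformation distance with conformal factor `ρ`: the infimum of
`∫ ρ ∘ γ` over all `1`-Lipschitz (w.r.t. `e`) curves joining `x` to `y`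
(equivalently, the infimum of `∫_γ ρ ds` over all rectifiable curves joining `x` to `y`). -/
def confDistWrt (e : X → X → ℝ) (ρ : X → ℝ) (x y : X) : ℝ :=
  sInf { l : ℝ | ∃ (T : ℝ) (γ : ℝ → X), 0 ≤ T ∧
    (∀ s ∈ Icc 0 T, ∀ t ∈ Icc 0 T, e (γ s) (γ t) ≤ |s - t|) ∧
    γ 0 = x ∧ γ T = y ∧ l = ∫ t in (0:ℝ)..T, ρ (γ t) }

/-- The quasihyperbolic metric of the space with distance `e`. -/
def quasiHypWrt (e : X → X → ℝ) : X → X → ℝ :=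
  confDistWrt e fun z => (bdryDistWrt e z)⁻¹

/-- `γ` is a geodesic segment from `x` to `y`, parametrized by arclength on `[0, e x y]`. -/
def IsGeodesicSegWrt (e : X → X → ℝ) (γ : ℝ → X) (x y : X) : Prop :=
  γ 0 = x ∧ γ (e x y) = y ∧
    ∀ s ∈ Icc 0 (e x y), ∀ t ∈ Icc 0 (e x y), e (γ s) (γ t) = |s - t|

/-- Any two points are joined by a geodesic. -/
def GeodesicSpaceWrt (e : X → X → ℝ) : Prop := ∀ x y : X, ∃ γ : ℝ → X, IsGeodesicSegWrt e γ x y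

/-- The image of a geodesic segment. -/
def segImageWrt (e : X → X → ℝ) (γ : ℝ → X) (x y : X) : Set X := γ '' Icc 0 (e x y)

/-- `δ`-hyperbolicity: every geodesic triangle is `δ`-thin. -/
def DeltaHyperbolicWrt (e : X → X → ℝ) (δ : ℝ) : Prop :=
  ∀ (x y z : X) (γ₁ γ₂ γ₃ : ℝ → X),
    IsGeodesicSegWrt e γ₁ x y → IsGeodesicSegWrt e γ₂ y z → IsGeodesicSegWrt e γ₃ z x →
    (∀ p ∈ segImageWrt e γ₁ x y, ∃ q ∈ segImageWrt e γ₂ y z ∪ segImageWrt e γ₃ z x, e p q ≤ δ) ∧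
    (∀ p ∈ segImageWrt e γ₂ y z, ∃ q ∈ segImageWrt e γ₁ x y ∪ segImageWrt e γ₃ z x, e p q ≤ δ) ∧
    (∀ p ∈ segImageWrt e γ₃ z x, ∃ q ∈ segImageWrt e γ₁ x y ∪ segImageWrt e γ₂ y z, e p q ≤ δ)

/-- `γ` is a geodesic ray (defined on `[0,∞)`). -/
def IsGeodesicRayWrt (e : X → X → ℝ) (γ : ℝ → X) : Prop :=
  ∀ s ∈ Ici (0:ℝ), ∀ t ∈ Ici (0:ℝ), e (γ s) (γ t) = |s - t|

/-- `γ` is a geodesic line. -/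
def IsGeodesicLineWrt (e : X → X → ℝ) (γ : ℝ → X) : Prop :=
  ∀ s t : ℝ, e (γ s) (γ t) = |s - t|

/-- Two rays are at bounded distance from each other (represent the same
point of the Gromov boundary). -/
def RayEquivWrt (e : X → X → ℝ) (γ σ : ℝ → X) : Prop :=
  ∃ c : ℝ, ∀ t ∈ Ici (0:ℝ), e (γ t) (σ t) ≤ c

/-- The infimal distance from `x` to the set `s`, w.r.t. `e`. -/
def infDistWrt (e : X → X → ℝ) (x : X) (s : Set X) : ℝ := sInf (e x '' s)

/-- `X` is `K`-roughly starlike from the point `z`. -/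
def RoughStarlikeFromPointWrt (e : X → X → ℝ) (K : ℝ) (z : X) : Prop :=
  ∀ x : X, ∃ γ : ℝ → X, IsGeodesicRayWrt e γ ∧ γ 0 = z ∧ infDistWrt e x (γ '' Ici 0) ≤ K

/-- `X` is `K`-roughly starlike from the Gromov boundary point represented by the
geodesic ray `ρ`: every point lies within distance `K` of a geodesic line starting
from that boundary point. -/
def RoughStarlikeFromRayWrt (e : X → X → ℝ) (K : ℝ) (ρ : ℝ → X) : Prop :=
  ∀ x : X, ∃ γ : ℝ → X, IsGeodesicLineWrt e γ ∧ RayEquivWrt e (fun t => γ (-t)) ρ ∧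
    infDistWrt e x (range γ) ≤ K

/-- The Busemann function of the geodesic ray `ρ`:
`b_ρ(x) = lim_{t→∞} (e (ρ t) x - t) = inf_{t ≥ 0} (e (ρ t) x - t)`. -/
def busemannWrt (e : X → X → ℝ) (ρ : ℝ → X) (x : X) : ℝ :=
  sInf ((fun t => e (ρ t) x - t) '' Ici 0)

/-- `b ∈ 𝔅̂(X)` (either a translated distance function or a translated Busemann
function), and `X` is `K`-roughly starlike from the basepoint of `b`. -/
def BhatStarlike (e : X → X → ℝ) (K : ℝ) (b : X → ℝ) : Prop :=
  (∃ (z : X) (s : ℝ), (∀ x, b x = e x z + s) ∧ RoughStarlikeFromPointWrt e K z) ∨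
  (∃ (ρ : ℝ → X) (s : ℝ), IsGeodesicRayWrt e ρ ∧ (∀ x, b x = busemannWrt e ρ x + s) ∧
    RoughStarlikeFromRayWrt e K ρ)

/-- `ρ` is a Gehring–Hayman density with constant `M`: the `ρ`-length of any geodesic
is at most `M` times the conformal distance between its endpoints. -/
def IsGHDensityWrt (e : X → X → ℝ) (M : ℝ) (ρ : X → ℝ) : Prop :=
  ∀ (x y : X) (γ : ℝ → X), IsGeodesicSegWrt e γ x y →
    (∫ t in (0:ℝ)..(e x y), ρ (γ t)) ≤ M * confDistWrt e ρ x y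

/-- The density `ρ_{ε,b}(x) = e^{-ε b(x)}`. -/
def uniformizationDensity (b : X → ℝ) (ε : ℝ) : X → ℝ := fun x => Real.exp (-ε * b x)

/-- The Gromov product of `x` and `y` based at `z`. -/
def gromovProdWrt (e : X → X → ℝ) (z x y : X) : ℝ := (e x z + e y z - e x y) / 2

/-- The sequence `u` represents the Gromov boundary point of the geodesic ray `ρ`
(with respect to the basepoint `z`). -/
def SeqRepWrt (e : X → X → ℝ) (z : X) (ρ : ℝ → X) (u : ℕ → X) : Prop :=
  Tendsto (fun n => gromovProdWrt e z (u n) (ρ n)) atTop atTop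

/-- The Gromov product, based at `z`, of the two boundary points represented by the
geodesic rays `ρ` and `σ` (valued in `[0,∞]`). -/
def bGromovProdWrt (e : X → X → ℝ) (z : X) (ρ σ : ℝ → X) : ℝ≥0∞ :=
  ⨅ (u : { u : ℕ → X // SeqRepWrt e z ρ u }) (v : { v : ℕ → X // SeqRepWrt e z σ v }),
    Filter.liminf (fun n => ENNReal.ofReal (gromovProdWrt e z (u.1 n) (v.1 n))) atTop

/-- `S(x) = sup_{ω ∈ ∂X} inf_{ξ ∈ ∂X} (ω|ξ)_x`. -/
def Sfun (e : X → X → ℝ) (x : X) : ℝ≥0∞ :=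
  ⨆ (ω : { ρ : ℝ → X // IsGeodesicRayWrt e ρ }),
    ⨅ (ξ : { ρ : ℝ → X // IsGeodesicRayWrt e ρ }), bGromovProdWrt e x ω.1 ξ.1

/-- The filter at the left end of the interval `I`. -/
def leftEndFilter (I : Set ℝ) : Filter ℝ :=
  if BddBelow I then 𝓝[I] (sInf I) else atBot ⊓ 𝓟 I

/-- The filter at the right end of the interval `I`. -/
def rightEndFilter (I : Set ℝ) : Filter ℝ :=
  if BddAbove I then 𝓝[I] (sSup I) else atTop ⊓ 𝓟 I

/-- `γ : I → Ω` is an `A`-uniform curve: it is rectifiable with endpoints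
`γ₋, γ₊` in the completion `Ω̄` satisfying `ℓ(γ) ≤ A d(γ₋,γ₊)` (or non-rectifiable with
`d(γ(s),γ(t)) → ∞` towards the endpoints of `I`), and at every time `t` the shorter of
the two subcurves has length at most `A d_Ω(γ(t))`. -/
def IsUniformCurve {Ω : Type*} [MetricSpace Ω] (A : ℝ) (γ : ℝ → Ω) (I : Set ℝ) : Prop :=
  I.Nonempty ∧ I.OrdConnected ∧ ContinuousOn γ I ∧
  ((varOn (distFun Ω) γ I ≠ ⊤ ∧
     ∃ gm gp : UniformSpace.Completion Ω,
       Tendsto (fun t => (γ t : UniformSpace.Completion Ω)) (leftEndFilter I) (𝓝 gm) ∧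
       Tendsto (fun t => (γ t : UniformSpace.Completion Ω)) (rightEndFilter I) (𝓝 gp) ∧
       varOn (distFun Ω) γ I ≤ ENNReal.ofReal (A * dist gm gp)) ∨
   (varOn (distFun Ω) γ I = ⊤ ∧
     Tendsto (fun pq : ℝ × ℝ => dist (γ pq.1) (γ pq.2))
       (leftEndFilter I ×ˢ rightEndFilter I) atTop)) ∧
  ∀ t ∈ I, min (varOn (distFun Ω) γ (I ∩ Iic t)) (varOn (distFun Ω) γ (I ∩ Ici t)) ≤
    ENNReal.ofReal (A * bdryDistWrt (distFun Ω) (γ t))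

theorem exists_tendsto_of_isCompact {ι α : Type*} [TopologicalSpace α] (U : Ultrafilter ι)
    {u : ι → α} {K : Set α} (hK : IsCompact K) (hu : ∀ᶠ i in U, u i ∈ K) :
    ∃ x ∈ K, Tendsto u U (𝓝 x) :=
  hK.ultrafilter_le_nhds (U.map u) (le_principal_iff.2 hu)

theorem exists_forall_tendsto_of_isCompact {ι α β : Type*} [TopologicalSpace α]
    (U : Ultrafilter ι) (f : ι → β → α) (S : Set β)
    (hf : ∀ b ∈ S, ∃ K, IsCompact K ∧ ∀ᶠ i in U, f i b ∈ K) :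
    ∃ g : β → α, ∀ b ∈ S, Tendsto (fun i => f i b) U (𝓝 (g b)) := by
  obtain ⟨i₀⟩ := (U : Filter ι).nonempty_of_neBot
  have : ∀ b, ∃ x, b ∈ S → Tendsto (fun i => f i b) U (𝓝 x) := fun b => by
    by_cases hb : b ∈ S
    · obtain ⟨K, hK, hfK⟩ := hf b hb
      obtain ⟨x, -, hx⟩ := exists_tendsto_of_isCompact U hK hfK
      exact ⟨x, fun _ => hx⟩
    · exact ⟨f i₀ b, fun h => absurd h hb⟩
  choose g hg using this
  exact ⟨g, hg⟩

theorem tendsto_atTop_of_natCast_add_le {f : ℕ → ℝ} (c : ℝ) (hf : ∀ n : ℕ, n + c ≤ f n) :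
    Tendsto f atTop atTop :=
  tendsto_atTop_mono hf (tendsto_atTop_add_const_right _ c tendsto_natCast_atTop_atTop)

section MetricLimits

variable {ι : Type*} [MetricSpace X]

theorem dist_eq_of_tendsto {l : Filter ι} [l.NeBot] {u v : ι → X} {a b : X} {d : ℝ}
    (hu : Tendsto u l (𝓝 a)) (hv : Tendsto v l (𝓝 b))
    (h : ∀ᶠ i in l, dist (u i) (v i) = d) : dist a b = d :=
  tendsto_nhds_unique (hu.dist hv) (tendsto_const_nhds.congr' (h.mono fun _ hi => hi.symm))

theorem tendsto_apply_of_dist_le {l : Filter ι} {f : ι → ℝ → X} {s : ι → ℝ} {t : ℝ} {y : X}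
    (hf : Tendsto (fun i => f i t) l (𝓝 y)) (hs : Tendsto s l (𝓝 t))
    (h : ∀ᶠ i in l, dist (f i (s i)) (f i t) ≤ dist (s i) t) :
    Tendsto (fun i => f i (s i)) l (𝓝 y) := by
  refine tendsto_iff_dist_tendsto_zero.2 (squeeze_zero' (Eventually.of_forall fun _ => dist_nonneg)
    (h.mono fun i hi => (dist_triangle _ (f i t) y).trans (add_le_add_left hi _)) ?_)
  simpa using (tendsto_iff_dist_tendsto_zero.1 hs).add (tendsto_iff_dist_tendsto_zero.1 hf)

end MetricLimits

section Geodesics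

variable [MetricSpace X]

@[simp]
theorem distFun_apply (x y : X) : distFun X x y = dist x y := rfl

theorem infDistWrt_le_dist {s : Set X} {x y : X} (hy : y ∈ s) :
    infDistWrt (distFun X) x s ≤ dist x y :=
  csInf_le ⟨0, by rintro _ ⟨_, _, rfl⟩; exact dist_nonneg⟩ (mem_image_of_mem _ hy)

theorem exists_dist_le_of_infDistWrt_le [ProperSpace X] {s : Set X} (hs : IsClosed s)
    (hne : s.Nonempty) {x : X} {K : ℝ} (h : infDistWrt (distFun X) x s ≤ K) :
    ∃ y ∈ s, dist x y ≤ K := by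
  obtain ⟨y, hy, hxy⟩ := hs.exists_infDist_eq_dist hne x
  refine ⟨y, hy, hxy ▸ le_trans ?_ h⟩
  exact le_csInf (hne.image _) (by rintro _ ⟨z, hz, rfl⟩; exact infDist_le_dist_of_mem hz)

namespace IsGeodesicSegWrt

variable {σ : ℝ → X} {x y : X}

theorem dist_eq (h : IsGeodesicSegWrt (distFun X) σ x y) {a b : ℝ} (ha : a ∈ Icc 0 (dist x y))
    (hb : b ∈ Icc 0 (dist x y)) : dist (σ a) (σ b) = |a - b| :=
  h.2.2 a ha b hb

theorem dist_left (h : IsGeodesicSegWrt (distFun X) σ x y) {t : ℝ} (ht : t ∈ Icc 0 (dist x y)) :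
    dist x (σ t) = t := by
  have := h.dist_eq ⟨le_rfl, dist_nonneg⟩ ht
  rwa [h.1, zero_sub, abs_neg, abs_of_nonneg ht.1] at this

theorem dist_right (h : IsGeodesicSegWrt (distFun X) σ x y) {t : ℝ}
    (ht : t ∈ Icc 0 (dist x y)) : dist (σ t) y = dist x y - t := by
  have hy : σ (dist x y) = y := h.2.1
  have := h.dist_eq ht ⟨dist_nonneg, le_rfl⟩
  rwa [hy, abs_sub_comm, abs_of_nonneg (sub_nonneg.2 ht.2)] at this

theorem reverse (h : IsGeodesicSegWrt (distFun X) σ x y) :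
    IsGeodesicSegWrt (distFun X) (fun t => σ (dist x y - t)) y x := by
  refine ⟨by simpa using h.2.1, ?_, fun a ha b hb => ?_⟩
  · simpa [dist_comm y x] using h.1
  · rw [distFun_apply, dist_comm y x] at ha hb
    rw [distFun_apply, h.dist_eq (a := dist x y - a) (b := dist x y - b)
      ⟨by linarith [ha.2], by linarith [ha.1]⟩ ⟨by linarith [hb.2], by linarith [hb.1]⟩,
      abs_sub_comm]
    ring_nf

theorem restrict (h : IsGeodesicSegWrt (distFun X) σ x y) {s : ℝ}
    (hs : s ∈ Icc 0 (dist x y)) : IsGeodesicSegWrt (distFun X) σ x (σ s) := by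
  have hd : distFun X x (σ s) = s := h.dist_left hs
  refine ⟨h.1, by rw [hd], fun a ha b hb => ?_⟩
  rw [hd] at ha hb
  exact h.2.2 a ⟨ha.1, ha.2.trans hs.2⟩ b ⟨hb.1, hb.2.trans hs.2⟩

end IsGeodesicSegWrt

theorem segImageWrt_reverse (σ : ℝ → X) (x y : X) :
    segImageWrt (distFun X) (fun t => σ (dist x y - t)) y x = segImageWrt (distFun X) σ x y := by
  ext q
  simp only [segImageWrt, distFun_apply, dist_comm y x, mem_image, mem_Icc]
  constructor
  · rintro ⟨t, ⟨h₀, h₁⟩, rfl⟩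
    exact ⟨dist x y - t, ⟨by linarith, by linarith⟩, rfl⟩
  · rintro ⟨t, ⟨h₀, h₁⟩, rfl⟩
    exact ⟨dist x y - t, ⟨by linarith, by linarith⟩, by rw [sub_sub_cancel]⟩

theorem IsGeodesicLineWrt.isGeodesicSeg {γ : ℝ → X} (hγ : IsGeodesicLineWrt (distFun X) γ)
    {a b : ℝ} (hab : a ≤ b) : IsGeodesicSegWrt (distFun X) (fun t => γ (a + t)) (γ a) (γ b) := by
  have hd : distFun X (γ a) (γ b) = b - a := by
    rw [hγ, abs_sub_comm, abs_of_nonneg (sub_nonneg.2 hab)]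
  refine ⟨by simp, by simp only [hd, add_sub_cancel], fun s _ t _ => ?_⟩
  rw [hγ, add_sub_add_left_eq_sub]

theorem IsGeodesicRayWrt.dist_zero {ρ : ℝ → X} (hρ : IsGeodesicRayWrt (distFun X) ρ) {T : ℝ}
    (hT : 0 ≤ T) : dist (ρ 0) (ρ T) = T :=
  (hρ 0 self_mem_Ici T hT).trans (by rw [zero_sub, abs_neg, abs_of_nonneg hT])

theorem IsGeodesicRayWrt.isGeodesicSeg {ρ : ℝ → X} (hρ : IsGeodesicRayWrt (distFun X) ρ)
    {T : ℝ} (hT : 0 ≤ T) : IsGeodesicSegWrt (distFun X) ρ (ρ 0) (ρ T) := by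
  have hd : distFun X (ρ 0) (ρ T) = T := hρ.dist_zero hT
  refine ⟨rfl, by rw [hd], fun s hs t ht => ?_⟩
  rw [hd] at hs ht
  exact hρ s hs.1 t ht.1

theorem IsGeodesicLineWrt.isClosed_range [ProperSpace X] {γ : ℝ → X}
    (hγ : IsGeodesicLineWrt (distFun X) γ) : IsClosed (range γ) :=
  (Isometry.of_dist_eq fun a b => (hγ a b).trans (Real.dist_eq a b).symm).isClosedEmbedding
    |>.isClosed_range

end Geodesics

section Hyperbolic

variable [MetricSpace X] {δ : ℝ}

theorem dist_le_of_isGeodesicSegWrt_of_thin (hgeo : GeodesicSpaceWrt (distFun X))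
    (hhyp : DeltaHyperbolicWrt (distFun X) δ) {α β : ℝ → X} {x y o : X}
    (hα : IsGeodesicSegWrt (distFun X) α x o) (hβ : IsGeodesicSegWrt (distFun X) β y o)
    {t : ℝ} (ht : 0 ≤ t) (htα : t ≤ dist x o) (htβ : t ≤ dist y o) :
    dist (α t) (β t) ≤ 3 * dist x y + 2 * δ := by
  obtain ⟨ζ, hζ⟩ := hgeo x y
  obtain ⟨q, hq, hβq⟩ := (hhyp y o x β _ ζ hβ hα.reverse hζ).1 (β t) ⟨t, ⟨ht, htβ⟩, rfl⟩
  rw [segImageWrt_reverse] at hq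
  rcases hq with ⟨r, hr, rfl⟩ | ⟨u, hu, rfl⟩
  · -- `β t` is `δ`-close to `α r`; comparing distances to `o` gives `|r - t| ≤ d(x, y) + δ`.
    have hβq' : dist (β t) (α r) ≤ δ := hβq
    have hαr : dist (α r) o = dist x o - r := hα.dist_right hr
    have hβo : dist (β t) o = dist y o - t := hβ.dist_right ⟨ht, htβ⟩
    have hrt : dist (α r) (α t) = |r - t| := hα.dist_eq hr ⟨ht, htα⟩
    have h₁ := dist_triangle (β t) (α r) o
    have h₂ := dist_triangle (α r) (β t) o
    have h₃ := abs_dist_sub_le x y o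
    rw [abs_le] at h₃
    have h₄ : |r - t| ≤ dist x y + δ := abs_le.2 ⟨by linarith [dist_comm (α r) (β t)], by linarith⟩
    linarith [dist_triangle (α t) (α r) (β t), dist_comm (α t) (α r), dist_comm (β t) (α r),
      dist_nonneg (x := x) (y := y)]
  · -- `β t` is `δ`-close to the side `[x, y]`, so `t ≤ d(x, y) + δ`.
    have hβt : dist y (β t) = t := hβ.dist_left ⟨ht, htβ⟩
    have hζu : dist (ζ u) y = dist x y - u := hζ.dist_right hu
    have hαt : dist x (α t) = t := hα.dist_left ⟨ht, htα⟩
    have hβq' : dist (β t) (ζ u) ≤ δ := hβq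
    have htle : t ≤ dist x y + δ := by
      linarith [dist_triangle y (ζ u) (β t), dist_comm y (ζ u), dist_comm (ζ u) (β t), hu.1]
    linarith [dist_triangle4 (α t) x y (β t), dist_comm (α t) x]

/-- Thinness of the triangle with vertices `γ (-T)`, `γ T`, `w`. -/
theorem exists_isGeodesicSegWrt_near_line (hgeo : GeodesicSpaceWrt (distFun X))
    (hhyp : DeltaHyperbolicWrt (distFun X) δ) {γ : ℝ → X} (hγ : IsGeodesicLineWrt (distFun X) γ)
    (t₀ : ℝ) {T : ℝ} (hT : |t₀| ≤ T) (w : X) :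
    ∃ (σ : ℝ → X) (y : X) (s : ℝ), IsGeodesicSegWrt (distFun X) σ w y ∧ dist (γ 0) y = T ∧
      s ∈ Icc 0 (dist w y) ∧ dist (γ t₀) (σ s) ≤ δ := by
  have hT₀ : 0 ≤ T := (abs_nonneg t₀).trans hT
  have hd : ∀ b, |b| = T → dist (γ 0) (γ b) = T := fun b hb =>
    (hγ 0 b).trans (by rw [zero_sub, abs_neg, hb])
  obtain ⟨σ₂, h₂⟩ := hgeo w (γ T)
  obtain ⟨σ₃, h₃⟩ := hgeo w (γ (-T))
  have hp : γ t₀ ∈ segImageWrt (distFun X) (fun t => γ (-T + t)) (γ (-T)) (γ T) := by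
    refine ⟨T + t₀, ?_, by simp⟩
    rw [hγ, abs_of_nonpos (by linarith)]
    constructor <;> linarith [abs_le.1 hT]
  obtain ⟨q, hq, hpq⟩ :=
    (hhyp _ _ _ _ _ _ (hγ.isGeodesicSeg (by linarith)) h₂.reverse h₃).1 _ hp
  rw [segImageWrt_reverse] at hq
  rcases hq with ⟨u, hu, rfl⟩ | ⟨u, hu, rfl⟩
  · exact ⟨σ₂, γ T, u, h₂, hd T (abs_of_nonneg hT₀), hu, hpq⟩
  · exact ⟨σ₃, γ (-T), u, h₃, hd (-T) (by rw [abs_neg, abs_of_nonneg hT₀]), hu, hpq⟩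

end Hyperbolic

section GeodesicLimits

variable [MetricSpace X] [ProperSpace X] {ι : Type*}

theorem exists_isGeodesicRayWrt_tendsto (U : Ultrafilter ι) {σ : ι → ℝ → X} {z : X} {y : ι → X}
    (hσ : ∀ i, IsGeodesicSegWrt (distFun X) (σ i) z (y i))
    (hy : Tendsto (fun i => dist z (y i)) U atTop) :
    ∃ g : ℝ → X, IsGeodesicRayWrt (distFun X) g ∧ g 0 = z ∧
      ∀ t ∈ Ici (0 : ℝ), Tendsto (fun i => σ i t) U (𝓝 (g t)) := by
  have hdom : ∀ t ∈ Ici (0 : ℝ), ∀ᶠ i in U, t ∈ Icc 0 (dist z (y i)) := fun t ht =>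
    (hy.eventually_ge_atTop t).mono fun _ hi => ⟨ht, hi⟩
  obtain ⟨g, hg⟩ := exists_forall_tendsto_of_isCompact U σ (Ici 0) fun t ht =>
    ⟨closedBall z t, isCompact_closedBall z t, (hdom t ht).mono fun i hi => by
      rw [mem_closedBall, dist_comm, (hσ i).dist_left hi]⟩
  refine ⟨g, fun a ha b hb => dist_eq_of_tendsto (hg a ha) (hg b hb) ?_, ?_, hg⟩
  · exact ((hdom a ha).and (hdom b hb)).mono fun i hi => (hσ i).dist_eq hi.1 hi.2
  · refine tendsto_nhds_unique (hg 0 self_mem_Ici) ?_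
    simpa only [fun i => (hσ i).1] using tendsto_const_nhds

theorem exists_isGeodesicLineWrt_tendsto (U : Ultrafilter ι) {σ : ι → ℝ → X} {x y : ι → X}
    (hσ : ∀ i, IsGeodesicSegWrt (distFun X) (σ i) (x i) (y i)) {s : ι → ℝ}
    (hs : Tendsto s U atTop) (hs' : Tendsto (fun i => dist (x i) (y i) - s i) U atTop)
    {p : X} {C : ℝ} (hp : ∀ i, dist (σ i (s i)) p ≤ C) :
    ∃ g : ℝ → X, IsGeodesicLineWrt (distFun X) g ∧
      ∀ t, Tendsto (fun i => σ i (s i + t)) U (𝓝 (g t)) := by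
  have hdom : ∀ t, ∀ᶠ i in U, s i + t ∈ Icc 0 (dist (x i) (y i)) := fun t =>
    ((hs.eventually_ge_atTop (-t)).and (hs'.eventually_ge_atTop t)).mono fun _ hi =>
      ⟨by linarith [hi.1], by linarith [hi.2]⟩
  have hiso : ∀ a b, ∀ᶠ i in U, dist (σ i (s i + a)) (σ i (s i + b)) = |a - b| := fun a b =>
    ((hdom a).and (hdom b)).mono fun i hi => by
      rw [(hσ i).dist_eq hi.1 hi.2, add_sub_add_left_eq_sub]
  obtain ⟨g, hg⟩ := exists_forall_tendsto_of_isCompact U (fun i t => σ i (s i + t)) univ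
    fun t _ => ⟨closedBall p (|t| + C), isCompact_closedBall _ _, (hiso t 0).mono fun i hi => by
      rw [mem_closedBall]
      have := dist_triangle (σ i (s i + t)) (σ i (s i + 0)) p
      rw [hi, sub_zero, add_zero] at this
      linarith [hp i]⟩
  exact ⟨g, fun a b => dist_eq_of_tendsto (hg a trivial) (hg b trivial) (hiso a b),
    fun t => hg t trivial⟩

end GeodesicLimits

section Starlike

variable [MetricSpace X] [ProperSpace X] {δ : ℝ}

theorem exists_isGeodesicRayWrt_near_line (hgeo : GeodesicSpaceWrt (distFun X))
    (hhyp : DeltaHyperbolicWrt (distFun X) δ) {γ : ℝ → X} (hγ : IsGeodesicLineWrt (distFun X) γ)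
    (t₀ : ℝ) (z : X) :
    ∃ g : ℝ → X, IsGeodesicRayWrt (distFun X) g ∧ g 0 = z ∧
      ∃ t ∈ Ici (0 : ℝ), dist (γ t₀) (g t) ≤ δ := by
  choose σ y s hσ hy hs hp using fun n : ℕ =>
    exists_isGeodesicSegWrt_near_line hgeo hhyp hγ t₀ (T := n + |t₀|) (by simp) z
  set U := Ultrafilter.of (atTop : Filter ℕ)
  have hU : ↑U ≤ (atTop : Filter ℕ) := Ultrafilter.of_le _
  have hlen : Tendsto (fun n => dist z (y n)) U atTop := by
    refine (tendsto_atTop_of_natCast_add_le (|t₀| - dist (γ 0) z) fun n => ?_).mono_left hU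
    linarith [dist_triangle (γ 0) z (y n), hy n]
  obtain ⟨g, hg, hg0, hlim⟩ := exists_isGeodesicRayWrt_tendsto U hσ hlen
  obtain ⟨t, ht, hst⟩ := exists_tendsto_of_isCompact U (isCompact_Icc (a := 0)
    (b := dist z (γ t₀) + δ)) <| Eventually.of_forall fun n => ⟨(hs n).1, by
      linarith [(hσ n).dist_left (hs n), dist_triangle z (γ t₀) (σ n (s n)), hp n]⟩
  have hσs : Tendsto (fun n => σ n (s n)) U (𝓝 (g t)) :=
    tendsto_apply_of_dist_le (hlim t ht.1) hst <| (hlen.eventually_ge_atTop t).mono fun n hn =>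
      ((hσ n).dist_eq (hs n) ⟨ht.1, hn⟩).trans_le (Real.dist_eq _ _).ge
  exact ⟨g, hg, hg0, t, ht.1, le_of_tendsto (tendsto_const_nhds.dist hσs) (.of_forall hp)⟩

theorem exists_isGeodesicLineWrt_near_line (hgeo : GeodesicSpaceWrt (distFun X))
    (hhyp : DeltaHyperbolicWrt (distFun X) δ) {γ : ℝ → X} (hγ : IsGeodesicLineWrt (distFun X) γ)
    (t₀ : ℝ) {ρ : ℝ → X} (hρ : IsGeodesicRayWrt (distFun X) ρ) :
    ∃ g : ℝ → X, IsGeodesicLineWrt (distFun X) g ∧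
      RayEquivWrt (distFun X) (fun t => g (-t)) ρ ∧ dist (γ t₀) (g 0) ≤ δ := by
  set T : ℕ → ℝ := fun n => n + |t₀|
  have hT : ∀ n, 0 ≤ T n := fun n => by positivity
  choose σ y s hσ hy hs hp using fun n =>
    exists_isGeodesicSegWrt_near_line hgeo hhyp hγ t₀ (T := T n) (by simp [T]) (ρ (T n))
  set p := γ t₀
  set U := Ultrafilter.of (atTop : Filter ℕ)
  have hU : ↑U ≤ (atTop : Filter ℕ) := Ultrafilter.of_le _
  set d₀ := dist (ρ 0) p
  have hsT : Tendsto s U atTop := by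
    refine (tendsto_atTop_of_natCast_add_le (|t₀| - d₀ - δ) fun n => ?_).mono_left hU
    linarith [(hσ n).dist_left (hs n), hρ.dist_zero (hT n), dist_triangle (ρ 0) p (ρ (T n)),
      dist_triangle (ρ (T n)) (σ n (s n)) p, dist_comm p (σ n (s n)), dist_comm p (ρ (T n)), hp n,
      (rfl : T n = n + |t₀|)]
  have hsy : Tendsto (fun n => dist (ρ (T n)) (y n) - s n) U atTop := by
    refine (tendsto_atTop_of_natCast_add_le (-δ) fun n => ?_).mono_left hU
    have hγp : dist (γ 0) p = |t₀| := (hγ 0 t₀).trans (by rw [zero_sub, abs_neg])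
    linarith [(hσ n).dist_right (hs n), dist_triangle (γ 0) p (y n), hy n,
      dist_triangle p (σ n (s n)) (y n), hp n, (rfl : T n = n + |t₀|)]
  obtain ⟨g, hg, hlim⟩ := exists_isGeodesicLineWrt_tendsto U hσ hsT hsy (p := p) (C := δ)
    fun n => (dist_comm _ _).trans_le (hp n)
  refine ⟨g, hg, ⟨3 * (d₀ + δ) + 2 * δ, fun t ht => ?_⟩, ?_⟩
  · have hTU : Tendsto T U atTop :=
      (tendsto_atTop_of_natCast_add_le |t₀| fun _ => le_rfl).mono_left hU
    refine le_of_tendsto ((hlim (-t)).dist tendsto_const_nhds) ?_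
    filter_upwards [hTU.eventually_ge_atTop t, hsT.eventually_ge_atTop t] with n htT hts
    have hβ := ((hσ n).restrict (hs n)).reverse
    have hsn : dist (ρ (T n)) (σ n (s n)) = s n := (hσ n).dist_left (hs n)
    have := dist_le_of_isGeodesicSegWrt_of_thin hgeo hhyp (hρ.isGeodesicSeg (hT n)) hβ
      (t := t) ht (by rw [hρ.dist_zero (hT n)]; exact htT) (by rw [dist_comm, hsn]; exact hts)
    rw [hsn, dist_comm] at this
    rw [← sub_eq_add_neg]
    linarith [dist_triangle (ρ 0) p (σ n (s n)), hp n]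
  · exact le_of_tendsto (tendsto_const_nhds.dist (hlim 0))
      (.of_forall fun n => by simpa only [add_zero] using hp n)

end Starlike

theorem statement7_general {X : Type*} [MetricSpace X] [ProperSpace X] (δ K : ℝ)
    (hδ : 0 ≤ δ)
    (hgeo : GeodesicSpaceWrt (distFun X)) (hhyp : DeltaHyperbolicWrt (distFun X) δ)
    (ω : ℝ → X)
    (hstar : RoughStarlikeFromRayWrt (distFun X) K ω) :
    (∀ z : X, RoughStarlikeFromPointWrt (distFun X) (K + 10 * δ) z) ∧
    ∀ ρ : ℝ → X, IsGeodesicRayWrt (distFun X) ρ →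
      RoughStarlikeFromRayWrt (distFun X) (K + 10 * δ) ρ := by
  have hnear : ∀ x : X, ∃ γ : ℝ → X, IsGeodesicLineWrt (distFun X) γ ∧
      ∃ t₀, dist x (γ t₀) ≤ K := fun x => by
    obtain ⟨γ, hγ, -, hK⟩ := hstar x
    obtain ⟨_, ⟨t₀, rfl⟩, hx⟩ :=
      exists_dist_le_of_infDistWrt_le hγ.isClosed_range (range_nonempty γ) hK
    exact ⟨γ, hγ, t₀, hx⟩
  refine ⟨fun z x => ?_, fun ρ hρ x => ?_⟩
  · obtain ⟨γ, hγ, t₀, hx⟩ := hnear x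
    obtain ⟨g, hg, hg0, t, ht, hgt⟩ := exists_isGeodesicRayWrt_near_line hgeo hhyp hγ t₀ z
    refine ⟨g, hg, hg0, (infDistWrt_le_dist (mem_image_of_mem g ht)).trans ?_⟩
    linarith [dist_triangle x (γ t₀) (g t)]
  · obtain ⟨γ, hγ, t₀, hx⟩ := hnear x
    obtain ⟨g, hg, hgρ, hg0⟩ := exists_isGeodesicLineWrt_near_line hgeo hhyp hγ t₀ hρ
    refine ⟨g, hg, hgρ, (infDistWrt_le_dist (mem_range_self 0)).trans ?_⟩
    linarith [dist_triangle x (γ t₀) (g 0)]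

/-- If a proper geodesic `δ`-hyperbolic space `X` whose Gromov boundary
contains at least two points is `K`-roughly starlike from a boundary point `ω ∈ ∂X`, then
it is `(K + 10δ)`-roughly starlike from every point of `X ∪ ∂X`. -/
theorem statement7 {X : Type*} [MetricSpace X] [ProperSpace X] (δ K : ℝ)
    (hδ : 0 ≤ δ) (hK : 0 ≤ K)
    (hgeo : GeodesicSpaceWrt (distFun X)) (hhyp : DeltaHyperbolicWrt (distFun X) δ)
    (htwo : ∃ ρ₁ ρ₂ : ℝ → X, IsGeodesicRayWrt (distFun X) ρ₁ ∧
      IsGeodesicRayWrt (distFun X) ρ₂ ∧ ¬ RayEquivWrt (distFun X) ρ₁ ρ₂)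
    (ω : ℝ → X) (hω : IsGeodesicRayWrt (distFun X) ω)
    (hstar : RoughStarlikeFromRayWrt (distFun X) K ω) :
    (∀ z : X, RoughStarlikeFromPointWrt (distFun X) (K + 10 * δ) z) ∧
    ∀ ρ : ℝ → X, IsGeodesicRayWrt (distFun X) ρ →
      RoughStarlikeFromRayWrt (distFun X) (K + 10 * δ) ρ :=
  statement7_general δ K hδ hgeo hhyp ω hstar

end Paper

end
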